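/- arXiv:2010.05559 — 7 statements merged into one kernel-verified Lean document; each statement's English description precedes it below -/
import Mathlib

section
/- Suppose positive integers a₁ ≤ a₂ ≤ b₂ ≤ b₁ < h satisfy min{a₁,a₂,b₁,b₂} ∈ {1,2}, a₁ + b₁ = h - 1, a₂ + b₂ = h - 1, and the rational function χ(T) = ∏ᵢ (T^{h-aᵢ}-1)(T^{h-bᵢ}-1) / ((T^{aᵢ}-1)(T^{bᵢ}-1)) is a polynomial. Then (a₁,a₂,b₂,b₁;h) is one of: (2,3,4,5;8), (1,2,3,4;6), (2,2,3,3;6), (1,2,2,3;5), (1,1,2,2;4), (1,1,1,1;3). -/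
/-!
A primitive `n`-th root of unity is a simple root of `X ^ m - 1` when `n ∣ m` and not a root
otherwise. Comparing root multiplicities, `χ` can only be a polynomial if every `n` divides at
least as many of the numerator exponents `h - aᵢ = bᵢ + 1`, `h - bᵢ = aᵢ + 1` as of the
denominator exponents `aᵢ, bᵢ`. Taking `n = b₁` and `n = b₂` forces `b₁` and `b₂` to equal
one of the small numerator exponents (they are all at most `b₁ + 1 ≤ 2 b₂`), which leaves the
six weights and `(2,3,3,4;7)`; the latter fails for `n = 3`.
-/

open Polynomial

namespace Polynomial

theorem X_pow_sub_one_ne_zero {R : Type*} [CommRing R] [Nontrivial R] {m : ℕ} (hm : m ≠ 0) :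
    (X ^ m - 1 : R[X]) ≠ 0 := by
  simpa using X_pow_sub_C_ne_zero (Nat.pos_of_ne_zero hm) (1 : R)

theorem multiset_prod_X_pow_sub_one_ne_zero {R : Type*} [CommRing R] [IsDomain R]
    {s : Multiset ℕ} (hs : 0 ∉ s) : (s.map fun m => (X ^ m - 1 : R[X])).prod ≠ 0 := by
  rw [Ne, Multiset.prod_eq_zero_iff, Multiset.mem_map]
  rintro ⟨m, hm, hm0⟩
  exact X_pow_sub_one_ne_zero (ne_of_mem_of_not_mem hm hs) hm0

variable {K : Type*} [Field K] [CharZero K]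

theorem rootMultiplicity_X_pow_sub_one {ζ : K} {n m : ℕ} (hζ : IsPrimitiveRoot ζ n)
    (hm : m ≠ 0) :
    rootMultiplicity ζ (X ^ m - 1 : K[X]) = if n ∣ m then 1 else 0 := by
  split_ifs with hnm
  · refine le_antisymm (rootMultiplicity_le_one_of_separable
      (X_pow_sub_one_separable_iff.mpr (Nat.cast_ne_zero.mpr hm)) ζ) ?_
    rw [Nat.one_le_iff_ne_zero, ← Nat.pos_iff_ne_zero,
      rootMultiplicity_pos (X_pow_sub_one_ne_zero hm)]
    simp [(hζ.pow_eq_one_iff_dvd m).mpr hnm]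
  · refine rootMultiplicity_eq_zero ?_
    simpa [sub_eq_zero] using mt (hζ.pow_eq_one_iff_dvd m).mp hnm

theorem rootMultiplicity_multiset_prod_X_pow_sub_one {ζ : K} {n : ℕ} (hζ : IsPrimitiveRoot ζ n)
    {s : Multiset ℕ} (hs : 0 ∉ s) :
    rootMultiplicity ζ (s.map fun m => (X ^ m - 1 : K[X])).prod = (s.filter (n ∣ ·)).card := by
  induction s using Multiset.induction_on with
  | empty => simp
  | cons m s ih =>
    rw [Multiset.mem_cons, not_or] at hs
    have hm : m ≠ 0 := Ne.symm hs.1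
    rw [Multiset.map_cons, Multiset.prod_cons, rootMultiplicity_mul
      (mul_ne_zero (X_pow_sub_one_ne_zero hm) (multiset_prod_X_pow_sub_one_ne_zero hs.2)),
      rootMultiplicity_X_pow_sub_one hζ hm, ih hs.2, Multiset.filter_cons]
    split_ifs <;> simp [add_comm]

theorem card_filter_dvd_le_of_multiset_prod_dvd {n : ℕ}
    (hn : n ≠ 0) {s t : Multiset ℕ} (hs : 0 ∉ s) (ht : 0 ∉ t)
    (h : (s.map fun m => (X ^ m - 1 : K[X])).prod ∣ (t.map fun m => (X ^ m - 1 : K[X])).prod) :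
    (s.filter (n ∣ ·)).card ≤ (t.filter (n ∣ ·)).card := by
  have : NeZero (n : K) := ⟨Nat.cast_ne_zero.mpr hn⟩
  obtain ⟨ζ, hζ⟩ := HasEnoughRootsOfUnity.exists_primitiveRoot (AlgebraicClosure K) n
  have h' := map_dvd (algebraMap K (AlgebraicClosure K)) h
  simp only [Polynomial.map_multiset_prod, Multiset.map_map, Function.comp_def,
    Polynomial.map_sub, Polynomial.map_pow, map_X, Polynomial.map_one] at h'
  rw [← rootMultiplicity_multiset_prod_X_pow_sub_one hζ hs,
    ← rootMultiplicity_multiset_prod_X_pow_sub_one hζ ht]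
  exact rootMultiplicity_le_rootMultiplicity_of_dvd (multiset_prod_X_pow_sub_one_ne_zero ht) h' _

end Polynomial

theorem Nat.eq_or_eq_two_mul_or_three_mul_le_of_dvd {d x : ℕ} (h : d ∣ x) (hx : x ≠ 0) :
    x = d ∨ x = 2 * d ∨ 3 * d ≤ x := by
  obtain ⟨k, rfl⟩ := h
  rcases Nat.lt_or_ge k 3 with hk | hk
  · interval_cases k <;> simp_all [mul_comm]
  · exact Or.inr (Or.inr (by rw [mul_comm]; exact Nat.mul_le_mul_left d hk))

theorem regular_weight_candidates {a₁ a₂ b₂ b₁ h : ℕ}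
    (h12 : a₁ ≤ a₂) (h2b : a₂ ≤ b₂) (hbb : b₂ ≤ b₁) (hmin : a₁ = 1 ∨ a₁ = 2)
    (hw1 : a₁ + b₁ = h - 1) (hw2 : a₂ + b₂ = h - 1)
    (hb₁ : b₁ ∣ b₁ + 1 ∨ b₁ ∣ a₁ + 1 ∨ b₁ ∣ b₂ + 1 ∨ b₁ ∣ a₂ + 1)
    (hb₂ : b₂ ∣ b₁ + 1 ∨ b₂ ∣ a₁ + 1 ∨ b₂ ∣ b₂ + 1 ∨ b₂ ∣ a₂ + 1) :
    ((a₁, a₂, b₂, b₁, h) = (2, 3, 4, 5, 8) ∨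
      (a₁, a₂, b₂, b₁, h) = (1, 2, 3, 4, 6) ∨
      (a₁, a₂, b₂, b₁, h) = (2, 2, 3, 3, 6) ∨
      (a₁, a₂, b₂, b₁, h) = (1, 2, 2, 3, 5) ∨
      (a₁, a₂, b₂, b₁, h) = (1, 1, 2, 2, 4) ∨
      (a₁, a₂, b₂, b₁, h) = (1, 1, 1, 1, 3)) ∨
    (a₁, a₂, b₂, b₁, h) = (2, 3, 3, 4, 7) := by
  have hb₁_eq : b₁ = 1 ∨ b₁ = a₁ + 1 ∨ b₁ = b₂ + 1 ∨ b₁ = a₂ + 1 := by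
    rcases hb₁ with hd | hd | hd | hd <;>
      rcases Nat.eq_or_eq_two_mul_or_three_mul_le_of_dvd hd (by omega) with hx | hx | hx <;>
      omega
  have hb₂_eq : b₂ = 1 ∨ b₁ + 1 = 2 * b₂ ∨ b₂ = a₁ + 1 ∨ b₂ = a₂ + 1 := by
    rcases hb₂ with hd | hd | hd | hd <;>
      rcases Nat.eq_or_eq_two_mul_or_three_mul_le_of_dvd hd (by omega) with hx | hx | hx <;>
      omega
  have h_le : h ≤ 8 := by
    rcases hb₁_eq with e₁ | e₁ | e₁ | e₁ <;> rcases hb₂_eq with e₂ | e₂ | e₂ | e₂ <;> omega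
  have h_ge : 3 ≤ h := by omega
  rcases hmin with rfl | rfl <;> interval_cases h <;> norm_num <;> omega

theorem regular_weight_of_card_filter_dvd_le {a₁ a₂ b₂ b₁ h : ℕ}
    (h12 : a₁ ≤ a₂) (h2b : a₂ ≤ b₂) (hbb : b₂ ≤ b₁) (hmin : a₁ = 1 ∨ a₁ = 2)
    (hw1 : a₁ + b₁ = h - 1) (hw2 : a₂ + b₂ = h - 1)
    (hcount : ∀ n, n ≠ 0 → (({a₁, b₁, a₂, b₂} : Multiset ℕ).filter (n ∣ ·)).card ≤
      (({b₁ + 1, a₁ + 1, b₂ + 1, a₂ + 1} : Multiset ℕ).filter (n ∣ ·)).card) :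
    (a₁, a₂, b₂, b₁, h) = (2, 3, 4, 5, 8) ∨
    (a₁, a₂, b₂, b₁, h) = (1, 2, 3, 4, 6) ∨
    (a₁, a₂, b₂, b₁, h) = (2, 2, 3, 3, 6) ∨
    (a₁, a₂, b₂, b₁, h) = (1, 2, 2, 3, 5) ∨
    (a₁, a₂, b₂, b₁, h) = (1, 1, 2, 2, 4) ∨
    (a₁, a₂, b₂, b₁, h) = (1, 1, 1, 1, 3) := by
  have hdvd : ∀ n ∈ ({a₁, b₁, a₂, b₂} : Multiset ℕ), n ≠ 0 →
      ∃ m ∈ ({b₁ + 1, a₁ + 1, b₂ + 1, a₂ + 1} : Multiset ℕ), n ∣ m := by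
    intro n hn hn0
    have hpos := (Multiset.card_pos_iff_exists_mem.mpr
      ⟨n, Multiset.mem_filter.mpr ⟨hn, dvd_rfl⟩⟩).trans_le (hcount n hn0)
    obtain ⟨m, hm⟩ := Multiset.card_pos_iff_exists_mem.mp hpos
    exact ⟨m, Multiset.mem_filter.mp hm⟩
  refine (regular_weight_candidates h12 h2b hbb hmin hw1 hw2
    (by simpa using hdvd b₁ (by simp) (by omega))
    (by simpa using hdvd b₂ (by simp) (by omega))).resolve_right ?_
  rintro ⟨rfl, rfl, rfl, rfl, rfl⟩
  exact absurd (hcount 3 three_ne_zero) (by decide)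

theorem regular_weight_classification_n2_general (a₁ a₂ b₂ b₁ h : ℕ)
    (h12 : a₁ ≤ a₂) (h2b : a₂ ≤ b₂) (hbb : b₂ ≤ b₁)
    (hmin : a₁ = 1 ∨ a₁ = 2)
    (hw1 : a₁ + b₁ = h - 1) (hw2 : a₂ + b₂ = h - 1)
    (hdvd : (X ^ a₁ - 1) * (X ^ b₁ - 1) * (X ^ a₂ - 1) * (X ^ b₂ - 1) ∣
      ((X ^ (h - a₁) - 1) * (X ^ (h - b₁) - 1) * (X ^ (h - a₂) - 1) * (X ^ (h - b₂) - 1) :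
        Polynomial ℚ)) :
    (a₁, a₂, b₂, b₁, h) = (2, 3, 4, 5, 8) ∨
    (a₁, a₂, b₂, b₁, h) = (1, 2, 3, 4, 6) ∨
    (a₁, a₂, b₂, b₁, h) = (2, 2, 3, 3, 6) ∨
    (a₁, a₂, b₂, b₁, h) = (1, 2, 2, 3, 5) ∨
    (a₁, a₂, b₂, b₁, h) = (1, 1, 2, 2, 4) ∨
    (a₁, a₂, b₂, b₁, h) = (1, 1, 1, 1, 3) := by
  rw [show h - a₁ = b₁ + 1 by omega, show h - b₁ = a₁ + 1 by omega,
    show h - a₂ = b₂ + 1 by omega, show h - b₂ = a₂ + 1 by omega] at hdvd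
  refine regular_weight_of_card_filter_dvd_le h12 h2b hbb hmin hw1 hw2 fun n hn => ?_
  refine card_filter_dvd_le_of_multiset_prod_dvd (K := ℚ) hn (by simp; omega) (by simp) ?_
  simpa [mul_assoc] using hdvd

/-- Classification of regular weights for `n = 2` (Proposition 2.2). -/
theorem regular_weight_classification_n2 (a₁ a₂ b₂ b₁ h : ℕ)
    (ha₁ : 0 < a₁) (h12 : a₁ ≤ a₂) (h2b : a₂ ≤ b₂) (hbb : b₂ ≤ b₁) (hbh : b₁ < h)
    (hmin : a₁ = 1 ∨ a₁ = 2)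
    (hw1 : a₁ + b₁ = h - 1) (hw2 : a₂ + b₂ = h - 1)
    (hdvd : (X ^ a₁ - 1) * (X ^ b₁ - 1) * (X ^ a₂ - 1) * (X ^ b₂ - 1) ∣
      ((X ^ (h - a₁) - 1) * (X ^ (h - b₁) - 1) * (X ^ (h - a₂) - 1) * (X ^ (h - b₂) - 1) :
        Polynomial ℚ)) :
    (a₁, a₂, b₂, b₁, h) = (2, 3, 4, 5, 8) ∨
    (a₁, a₂, b₂, b₁, h) = (1, 2, 3, 4, 6) ∨
    (a₁, a₂, b₂, b₁, h) = (2, 2, 3, 3, 6) ∨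
    (a₁, a₂, b₂, b₁, h) = (1, 2, 2, 3, 5) ∨
    (a₁, a₂, b₂, b₁, h) = (1, 1, 2, 2, 4) ∨
    (a₁, a₂, b₂, b₁, h) = (1, 1, 1, 1, 3) :=
  regular_weight_classification_n2_general a₁ a₂ b₂ b₁ h h12 h2b hbb hmin hw1 hw2 hdvd
end

section
/- Suppose positive integers a₁ < a₂ < ⋯ < aₙ ≤ bₙ < ⋯ < b₁ < h, with aᵢ + bᵢ = h - 1 for all i, are such that χ(T) = ∏ᵢ (T^{aᵢ+1}-1)(T^{bᵢ+1}-1) / ((T^{aᵢ}-1)(T^{bᵢ}-1)) is a polynomial and min{a₁} ∈ {1,2}. Then the tuple (a₁,…,aₙ,bₙ,…,b₁;h) is one of (1,…,n,n,…,2n-1;2n+1), (1,…,n,n+1,…,2n;2n+2), or (2,…,n+1,n+2,…,2n+1;2n+4). -/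
open Polynomial Finset

private lemma eq_of_dvd_lt {d m : ℕ} (h0 : 0 < m) (hd : d ∣ m) (h2 : m < 2 * d) : m = d := by
  obtain ⟨t, rfl⟩ := hd
  rcases t with _ | _ | t
  · omega
  · omega
  · exfalso
    have : d * 2 ≤ d * (t + 1 + 1) := Nat.mul_le_mul_left d (by omega)
    omega

private lemma not_dvd_of_between {d m : ℕ} (h1 : d < m) (h2 : m < 2 * d) : ¬ d ∣ m :=
  fun hd => by have := eq_of_dvd_lt (by omega) hd h2; omega

private lemma not_dvd_of_lt {d m : ℕ} (h0 : 0 < m) (h1 : m < d) : ¬ d ∣ m :=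
  fun hd => by have := Nat.le_of_dvd h0 hd; omega


private lemma Xk_ne (k : ℕ) (hk : 0 < k) : (X ^ k - 1 : Polynomial ℂ) ≠ 0 := by
  intro h
  have := congrArg (eval 0) h
  simp [zero_pow hk.ne'] at this

private lemma count_root {d : ℕ} {ζ : ℂ} (hζ : IsPrimitiveRoot ζ d)
    (k : ℕ) (hk : 0 < k) :
    Multiset.count ζ ((X ^ k - 1 : Polynomial ℂ).roots) = if d ∣ k then 1 else 0 := by
  have hne := Xk_ne k hk
  have hsep : (X ^ k - 1 : Polynomial ℂ).Separable := by
    have := separable_X_pow_sub_C (1 : ℂ) (F := ℂ)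
      (Nat.cast_ne_zero.mpr hk.ne') one_ne_zero
    simpa using this
  have hnodup := nodup_roots hsep
  have hmem : ζ ∈ (X ^ k - 1 : Polynomial ℂ).roots ↔ d ∣ k := by
    rw [mem_roots hne, ← hζ.pow_eq_one_iff_dvd]
    simp [IsRoot.def, sub_eq_zero]
  split_ifs with h
  · exact Multiset.count_eq_one_of_mem hnodup (hmem.mpr h)
  · exact Multiset.count_eq_zero_of_notMem (fun hm => h (hmem.mp hm))

private lemma prod_count (n : ℕ) (u v : Fin n → ℕ) (hu : ∀ i, 0 < u i) (hv : ∀ i, 0 < v i)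
    {d : ℕ} {ζ : ℂ} (hζ : IsPrimitiveRoot ζ d) :
    Multiset.count ζ ((∏ i, (X ^ u i - 1) * (X ^ v i - 1) : Polynomial ℂ).roots)
      = (univ.filter fun i => d ∣ u i).card + (univ.filter fun i => d ∣ v i).card := by
  have hne : ∀ i : Fin n, ((X ^ u i - 1) * (X ^ v i - 1) : Polynomial ℂ) ≠ 0 :=
    fun i => mul_ne_zero (Xk_ne _ (hu i)) (Xk_ne _ (hv i))
  have hPne : (∏ i, (X ^ u i - 1) * (X ^ v i - 1) : Polynomial ℂ) ≠ 0 :=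
    Finset.prod_ne_zero_iff.mpr fun i _ => hne i
  rw [Polynomial.roots_prod _ _ hPne, Multiset.count_bind]
  have : ∀ i : Fin n,
      Multiset.count ζ (((X ^ u i - 1) * (X ^ v i - 1) : Polynomial ℂ).roots)
        = (if d ∣ u i then 1 else 0) + (if d ∣ v i then 1 else 0) := by
    intro i
    rw [Polynomial.roots_mul (hne i), Multiset.count_add, count_root hζ _ (hu i),
      count_root hζ _ (hv i)]
  calc (Multiset.map (fun i => Multiset.count ζ
        (((X ^ u i - 1) * (X ^ v i - 1) : Polynomial ℂ).roots)) univ.val).sum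
      = ∑ i : Fin n, ((if d ∣ u i then 1 else 0) + (if d ∣ v i then 1 else 0)) := by
        rw [Finset.sum]
        exact congrArg _ (Multiset.map_congr rfl (fun i _ => this i))
    _ = _ := by
        rw [Finset.sum_add_distrib, Finset.card_filter, Finset.card_filter]

private lemma key_count {n : ℕ} (a b : Fin n → ℕ) (ha : ∀ i, 0 < a i) (hb : ∀ i, 0 < b i)
    (hdvd : (∏ i, (X ^ a i - 1) * (X ^ b i - 1)) ∣
      ((∏ i, (X ^ (a i + 1) - 1) * (X ^ (b i + 1) - 1)) : Polynomial ℚ))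
    (d : ℕ) (hd : 0 < d) :
    ((univ.filter fun i => d ∣ a i).card + (univ.filter fun i => d ∣ b i).card) ≤
    ((univ.filter fun i => d ∣ a i + 1).card + (univ.filter fun i => d ∣ b i + 1).card) := by
  have hζ : IsPrimitiveRoot (Complex.exp (2 * Real.pi * Complex.I / d)) d :=
    Complex.isPrimitiveRoot_exp d hd.ne'
  set ζ := Complex.exp (2 * Real.pi * Complex.I / d)
  have hC : (∏ i, (X ^ a i - 1) * (X ^ b i - 1) : Polynomial ℂ) ∣
      (∏ i, (X ^ (a i + 1) - 1) * (X ^ (b i + 1) - 1) : Polynomial ℂ) := by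
    have h2 := map_dvd (mapRingHom (algebraMap ℚ ℂ)) hdvd
    simpa only [map_prod, map_mul, map_sub, map_pow, coe_mapRingHom, map_X, map_one,
      Polynomial.map_mul, Polynomial.map_sub, Polynomial.map_pow, Polynomial.map_X,
      Polynomial.map_one] using h2
  have hQne : (∏ i, (X ^ (a i + 1) - 1) * (X ^ (b i + 1) - 1) : Polynomial ℂ) ≠ 0 :=
    Finset.prod_ne_zero_iff.mpr fun i _ =>
      mul_ne_zero (Xk_ne _ (Nat.succ_pos _)) (Xk_ne _ (Nat.succ_pos _))
  have hle := Multiset.count_le_of_le ζ (Polynomial.roots.le_of_dvd hQne hC)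
  rwa [prod_count n a b ha hb hζ,
    prod_count n (fun i => a i + 1) (fun i => b i + 1) (fun i => Nat.succ_pos _)
      (fun i => Nat.succ_pos _) hζ] at hle

/-- Lemma 2.3(iii): if the `aᵢ` are strictly increasing, the `bᵢ` strictly decreasing,
`aᵢ + bᵢ = h - 1`, `aₙ ≤ bₙ`, `a₁ ∈ {1,2}` and
`χ(T) = ∏ᵢ (T^{aᵢ+1}-1)(T^{bᵢ+1}-1)/((T^{aᵢ}-1)(T^{bᵢ}-1))` is a polynomial, then the
weight is `(1,…,n,n,…,2n-1;2n+1)`, `(1,…,n,n+1,…,2n;2n+2)` or `(2,…,n+1,n+2,…,2n+1;2n+4)`. -/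
theorem regular_weight_strict_case (n h : ℕ) (hn : 0 < n) (a b : Fin n → ℕ)
    (hpos : ∀ i, 0 < a i)
    (hmono : StrictMono a) (hanti : StrictAnti b)
    (hab : ∀ i, a i + b i = h - 1)
    (hlast : a ⟨n - 1, by omega⟩ ≤ b ⟨n - 1, by omega⟩)
    (hmin : a ⟨0, hn⟩ = 1 ∨ a ⟨0, hn⟩ = 2)
    (hdvd : (∏ i, (X ^ a i - 1) * (X ^ b i - 1)) ∣
      ((∏ i, (X ^ (a i + 1) - 1) * (X ^ (b i + 1) - 1)) : Polynomial ℚ)) :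
    ((∀ i : Fin n, a i = (i : ℕ) + 1 ∧ b i = 2 * n - 1 - (i : ℕ)) ∧ h = 2 * n + 1) ∨
    ((∀ i : Fin n, a i = (i : ℕ) + 1 ∧ b i = 2 * n - (i : ℕ)) ∧ h = 2 * n + 2) ∨
    ((∀ i : Fin n, a i = (i : ℕ) + 2 ∧ b i = 2 * n + 1 - (i : ℕ)) ∧ h = 2 * n + 4) := by
  have hn1 : n - 1 < n := by omega
  set L : Fin n := ⟨n - 1, hn1⟩ with hLdef
  have hjL : ∀ j : Fin n, j ≤ L := fun j => by
    rw [Fin.le_def]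
    have := j.isLt
    simp only [hLdef]
    omega
  have hlast' : a L ≤ b L := hlast
  have haL : ∀ j : Fin n, a j ≤ a L := fun j => hmono.monotone (hjL j)
  have hbL : ∀ j : Fin n, b L ≤ b j := fun j => hanti.antitone (hjL j)
  have hbpos : ∀ i, 0 < b i := fun i => lt_of_lt_of_le (lt_of_lt_of_le (hpos L) hlast') (hbL i)
  have key := key_count a b hpos hbpos hdvd
  -- gap lemma for strict mono
  have hstep : ∀ (l : ℕ) (hl : l < n) (i : Fin n), (i : ℕ) ≤ l →
      a i + (l - (i : ℕ)) ≤ a ⟨l, hl⟩ := by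
    intro l
    induction l with
    | zero =>
      intro hl i hij
      have : i = ⟨0, hl⟩ := Fin.ext (by simp; omega)
      rw [this]
      simp
    | succ l ih =>
      intro hl i hij
      by_cases hc : (i : ℕ) = l + 1
      · have hi : i = ⟨l + 1, hl⟩ := Fin.ext hc
        rw [hi]
        simp
      · have hl' : l < n := by omega
        have h1 := ih hl' i (by omega)
        have h2 : a ⟨l, hl'⟩ < a ⟨l + 1, hl⟩ := hmono (Fin.mk_lt_mk.mpr (by omega))
        omega
  have ha0 : 0 < a ⟨0, hn⟩ := hpos _
  have hanL : a ⟨0, hn⟩ + (n - 1) ≤ a L := by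
    have := hstep (n - 1) hn1 ⟨0, hn⟩ (by simp)
    simpa using this
  -- consecutiveness
  have hcons : ∀ (k : ℕ) (hk : k < n), a ⟨k, hk⟩ = a ⟨0, hn⟩ + k := by
    intro k
    induction k with
    | zero => intro hk; rfl
    | succ k ih =>
      intro hk
      have hk' : k < n := by omega
      have ihk := ih hk'
      set K : Fin n := ⟨k, hk'⟩ with hK
      set K1 : Fin n := ⟨k + 1, hk⟩ with hK1
      set d := b K with hd
      have hbLK := hbL K
      have hdge : k + 2 ≤ d := by omega
      have h2 := key d (by omega)
      have h1 : 0 < (univ.filter fun i => d ∣ b i).card :=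
        Finset.card_pos.mpr ⟨K, Finset.mem_filter.mpr ⟨Finset.mem_univ _, dvd_refl d⟩⟩
      have hKK1 : K < K1 := Fin.mk_lt_mk.mpr (by omega)
      have hbK1lt : b K1 < d := hanti hKK1
      have hbLK1 := hbL K1
      have hbk1 : b K1 = d - 1 := by
        rcases Nat.lt_or_ge 0 (univ.filter fun i => d ∣ a i + 1).card with hp1 | hp0
        · obtain ⟨j, hj⟩ := Finset.card_pos.mp hp1
          rw [Finset.mem_filter] at hj
          have hdvdj := hj.2
          have e1 : a j ≤ a L := haL j
          have e2 : d ≤ a j + 1 := Nat.le_of_dvd (by omega) hdvdj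
          have e3 : a j + 1 = d := by
            by_contra hne
            have he : a j + 1 = d + 1 := by omega
            rw [he] at hdvdj
            have : d ∣ 1 := (Nat.dvd_add_right (dvd_refl d)).mp hdvdj
            omega
          omega
        · have hp2 : 0 < (univ.filter fun i => d ∣ b i + 1).card := by omega
          obtain ⟨j, hj⟩ := Finset.card_pos.mp hp2
          rw [Finset.mem_filter] at hj
          have hdvdj := hj.2
          have hs0 := hab ⟨0, hn⟩
          have hsK := hab K
          have hb0j : b j ≤ b ⟨0, hn⟩ := hanti.antitone (by rw [Fin.le_def]; simp)
          have e1 : b j + 1 ≤ d + k + 1 := by omega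
          have e3 : b j + 1 = d := eq_of_dvd_lt (by omega) hdvdj (by omega)
          have e4 : K < j := by
            by_contra hc
            have hjK : j ≤ K := not_lt.mp hc
            have := hanti.antitone hjK
            omega
          have e4' : k < (j : ℕ) := by simpa [hK, Fin.lt_def] using e4
          have e5 : b j ≤ b K1 := hanti.antitone (by
            simp only [hK1, Fin.le_def, Fin.val_mk]; omega)
          omega
      have h01 := hab K1
      have h02 := hab K
      have hbKpos := hbpos K
      omega
  -- values of a and b
  have haval : ∀ i : Fin n, a i = a ⟨0, hn⟩ + (i : ℕ) := by
    intro i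
    have := hcons i.val i.isLt
    simpa using this
  have hh : h = a ⟨0, hn⟩ + b ⟨0, hn⟩ + 1 := by
    have := hab ⟨0, hn⟩
    have := hbpos ⟨0, hn⟩
    omega
  set S := a ⟨0, hn⟩ + b ⟨0, hn⟩ with hSdef
  have hbs : ∀ i : Fin n, a ⟨0, hn⟩ + (i : ℕ) + b i = S := by
    intro i
    have h1 := hab i
    have h2 := hab ⟨0, hn⟩
    have h3 := haval i
    omega
  have hbsL : a ⟨0, hn⟩ + (n - 1) + b L = S := by
    have := hbs L
    simpa [hLdef] using this
  have haLval : a L = a ⟨0, hn⟩ + (n - 1) := by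
    have := haval L
    simpa [hLdef] using this
  rcases hmin with hα | hα
  · -- a₀ = 1
    have hS2n : 2 * n ≤ S := by omega
    have hSle : S ≤ 2 * n + 1 := by
      by_contra hc
      push_neg at hc
      set d := S - n with hddef
      have h2 := key d (by omega)
      have h1 : 0 < (univ.filter fun i => d ∣ b i).card := by
        refine Finset.card_pos.mpr ⟨L, Finset.mem_filter.mpr ⟨Finset.mem_univ _, ?_⟩⟩
        have hbd : b L = d := by omega
        rw [hbd]
      have hA : (univ.filter fun i => d ∣ a i + 1) = ∅ := by
        refine Finset.filter_eq_empty_iff.mpr (fun j _ => ?_)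
        have h3 := haval j
        have h4 := j.isLt
        exact not_dvd_of_lt (by omega) (by omega)
      have hB : (univ.filter fun i => d ∣ b i + 1) = ∅ := by
        refine Finset.filter_eq_empty_iff.mpr (fun j _ => ?_)
        have h3 := hbs j
        have h4 := j.isLt
        exact not_dvd_of_between (by omega) (by omega)
      rw [hA, hB] at h2
      simp only [Finset.card_empty, Nat.add_zero, Nat.le_zero] at h2
      omega
    rcases (by omega : S = 2 * n ∨ S = 2 * n + 1) with hS | hS
    · left
      refine ⟨fun i => ?_, by omega⟩
      have h3 := hbs i
      have h4 := haval i
      have h5 := i.isLt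
      exact ⟨by omega, by omega⟩
    · right; left
      refine ⟨fun i => ?_, by omega⟩
      have h3 := hbs i
      have h4 := haval i
      have h5 := i.isLt
      exact ⟨by omega, by omega⟩
  · -- a₀ = 2
    have hS2n : 2 * n + 2 ≤ S := by omega
    have hne22 : S ≠ 2 * n + 2 := by
      intro hS
      set d := n + 1 with hddef
      have h2 := key d (by omega)
      have h1a : 0 < (univ.filter fun i => d ∣ a i).card := by
        refine Finset.card_pos.mpr ⟨L, Finset.mem_filter.mpr ⟨Finset.mem_univ _, ?_⟩⟩
        have had : a L = d := by omega
        rw [had]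
      have h1b : 0 < (univ.filter fun i => d ∣ b i).card := by
        refine Finset.card_pos.mpr ⟨L, Finset.mem_filter.mpr ⟨Finset.mem_univ _, ?_⟩⟩
        have hbd : b L = d := by omega
        rw [hbd]
      have hB : (univ.filter fun i => d ∣ b i + 1) = ∅ := by
        refine Finset.filter_eq_empty_iff.mpr (fun j _ => ?_)
        have h3 := hbs j
        have h4 := j.isLt
        exact not_dvd_of_between (by omega) (by omega)
      have hA : (univ.filter fun i => d ∣ a i + 1).card ≤ 1 := by
        refine Finset.card_le_one.mpr (fun i hi j hj => ?_)
        rw [Finset.mem_filter] at hi hj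
        have hvi := haval i
        have hvj := haval j
        have hii := i.isLt
        have hjj := j.isLt
        have e1 : a i + 1 = d := eq_of_dvd_lt (by omega) hi.2 (by omega)
        have e2 : a j + 1 = d := eq_of_dvd_lt (by omega) hj.2 (by omega)
        exact Fin.ext (by omega)
      rw [hB] at h2
      simp only [Finset.card_empty, Nat.add_zero] at h2
      omega
    have hSle : S ≤ 2 * n + 3 := by
      by_contra hc
      push_neg at hc
      set d := S - n - 1 with hddef
      have h2 := key d (by omega)
      have h1 : 0 < (univ.filter fun i => d ∣ b i).card := by
        refine Finset.card_pos.mpr ⟨L, Finset.mem_filter.mpr ⟨Finset.mem_univ _, ?_⟩⟩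
        have hbd : b L = d := by omega
        rw [hbd]
      have hA : (univ.filter fun i => d ∣ a i + 1) = ∅ := by
        refine Finset.filter_eq_empty_iff.mpr (fun j _ => ?_)
        have h3 := haval j
        have h4 := j.isLt
        exact not_dvd_of_lt (by omega) (by omega)
      have hB : (univ.filter fun i => d ∣ b i + 1) = ∅ := by
        refine Finset.filter_eq_empty_iff.mpr (fun j _ => ?_)
        have h3 := hbs j
        have h4 := j.isLt
        exact not_dvd_of_between (by omega) (by omega)
      rw [hA, hB] at h2
      simp only [Finset.card_empty, Nat.add_zero, Nat.le_zero] at h2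
      omega
    have hS : S = 2 * n + 3 := by omega
    right; right
    refine ⟨fun i => ?_, by omega⟩
    have h3 := hbs i
    have h4 := haval i
    have h5 := i.isLt
    exact ⟨by omega, by omega⟩
end

section
/- Let H₁,…,H_k be quasihomogeneous polynomials on ℂ^{2m} that pairwise Poisson-commute, with H_i(λᵃq, λᵇp) = λ^{hᵢ} H_i(q,p) and aⱼ + bⱼ + 1 = h₁ for all j. Let c ∈ ℂ^{2m} be a balance of the Hamiltonian system for H₁, i.e. ∂H₁/∂pᵢ(c) = −aᵢcᵢ and ∂H₁/∂qᵢ(c) = bᵢc_{m+i}. Then H_i(c) = 0 for every i = 1,…,k. -/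
open MvPolynomial

section Aux

variable {σ : Type*} [Fintype σ] [DecidableEq σ]

private lemma two_pow_inj_C {p q : ℕ} (hpq : (2:ℂ)^p = (2:ℂ)^q) : p = q := by
  have : ((2^p : ℕ) : ℂ) = ((2^q : ℕ) : ℂ) := by push_cast; exact hpq
  exact Nat.pow_right_injective (le_refl 2) (Nat.cast_injective this)

/-- Step A: from the scaling identity, every monomial in the support has
weighted degree `n`. -/
private lemma wh_of_eval (w : σ → ℕ) (n : ℕ) (P : MvPolynomial σ ℂ)
    (hq : ∀ (t : ℂ) (x : σ → ℂ), eval (fun j => t ^ w j * x j) P = t ^ n * eval x P)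
    {d : σ →₀ ℕ} (hd : d ∈ P.support) : ∑ j, w j * d j = n := by
  have key : ∀ t : ℂ, P.coeff d * t ^ (∑ j, w j * d j) = t ^ n * P.coeff d := by
    intro t
    have hA : (∑ e ∈ P.support, monomial e (P.coeff e * t ^ (∑ j, w j * e j)))
        = C (t ^ n) * P := by
      apply MvPolynomial.funext
      intro x
      have lhs : eval x (∑ e ∈ P.support, monomial e (P.coeff e * t ^ (∑ j, w j * e j)))
          = eval (fun j => t ^ w j * x j) P := by
        rw [map_sum, eval_eq' (fun j => t ^ w j * x j) P]
        refine Finset.sum_congr rfl fun e _ => ?_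
        rw [eval_monomial, Finsupp.prod_fintype _ _ (fun i => pow_zero _)]
        rw [mul_assoc]
        congr 1
        rw [← Finset.prod_pow_eq_pow_sum, ← Finset.prod_mul_distrib]
        exact Finset.prod_congr rfl fun j _ => by rw [mul_pow, pow_mul]
      rw [lhs, hq t x, eval_mul, eval_C]
    have h2 := congrArg (fun Q => MvPolynomial.coeff d Q) hA
    simp only [MvPolynomial.coeff_sum, MvPolynomial.coeff_monomial, MvPolynomial.coeff_C_mul,
      Finset.sum_ite_eq' P.support d, hd, if_pos] at h2
    exact h2
  have hc : P.coeff d ≠ 0 := mem_support_iff.mp hd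
  have h2 := key 2
  have hpow : (2:ℂ) ^ (∑ j, w j * d j) = (2:ℂ) ^ n := by
    have := h2
    rw [mul_comm ((2:ℂ)^n) (P.coeff d)] at this
    exact mul_left_cancel₀ hc this
  exact two_pow_inj_C hpow

private lemma mono_deriv (d : σ →₀ ℕ) (cf : ℂ) (j : σ) (x : σ → ℂ) :
    x j * eval x (pderiv j (monomial d cf)) = (d j : ℂ) * cf * ∏ i, x i ^ d i := by
  rw [pderiv_monomial, eval_monomial, Finsupp.prod_fintype _ _ (fun i => pow_zero _)]
  rcases Nat.eq_zero_or_pos (d j) with h0 | hpos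
  · simp [h0]
  · set d' : σ →₀ ℕ := d - Finsupp.single j 1 with hd'def
    have hd' : ∀ i, d' i = d i - (if j = i then 1 else 0) := by
      intro i; simp [hd'def, Finsupp.sub_apply, Finsupp.single_apply]
    have hprod : x j * ∏ i, x i ^ d' i = ∏ i, x i ^ d i := by
      rw [Finset.prod_eq_mul_prod_sdiff_singleton_of_mem (Finset.mem_univ j)
            (fun i => x i ^ d' i),
          Finset.prod_eq_mul_prod_sdiff_singleton_of_mem (Finset.mem_univ j)
            (fun i => x i ^ d i)]
      have h1 : ∀ i ∈ Finset.univ \ {j}, x i ^ d' i = x i ^ d i := by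
        intro i hi
        have hji : j ≠ i := fun hji => by simp [hji] at hi
        rw [hd', if_neg hji, Nat.sub_zero]
      rw [Finset.prod_congr rfl h1, ← mul_assoc]
      congr 1
      rw [hd' j, if_pos rfl, ← pow_succ', Nat.sub_add_cancel hpos]
    calc x j * (cf * (d j : ℂ) * ∏ i, x i ^ d' i)
        = (cf * (d j : ℂ)) * (x j * ∏ i, x i ^ d' i) := by ring
      _ = (d j : ℂ) * cf * ∏ i, x i ^ d i := by rw [hprod]; ring

/-- Step B: weighted Euler identity. -/
private lemma euler_identity (w : σ → ℕ) (n : ℕ) (P : MvPolynomial σ ℂ)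
    (hwh : ∀ d ∈ P.support, ∑ j, w j * d j = n) (x : σ → ℂ) :
    ∑ j, (w j : ℂ) * x j * eval x (pderiv j P) = (n : ℂ) * eval x P := by
  have hder : ∀ j, eval x (pderiv j P)
      = ∑ d ∈ P.support, eval x (pderiv j (monomial d (P.coeff d))) := by
    intro j
    conv_lhs => rw [← support_sum_monomial_coeff P]
    rw [map_sum, map_sum]
  calc ∑ j, (w j : ℂ) * x j * eval x (pderiv j P)
      = ∑ j, ∑ d ∈ P.support, (w j : ℂ) * ((d j : ℂ) * P.coeff d * ∏ i, x i ^ d i) := by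
        refine Finset.sum_congr rfl fun j _ => ?_
        rw [hder j, Finset.mul_sum]
        refine Finset.sum_congr rfl fun d _ => ?_
        rw [mul_assoc, mono_deriv]
    _ = ∑ d ∈ P.support, (∑ j, (w j : ℂ) * (d j : ℂ)) * (P.coeff d * ∏ i, x i ^ d i) := by
        rw [Finset.sum_comm]
        refine Finset.sum_congr rfl fun d _ => ?_
        rw [Finset.sum_mul]
        exact Finset.sum_congr rfl fun j _ => by ring
    _ = ∑ d ∈ P.support, (n : ℂ) * (P.coeff d * ∏ i, x i ^ d i) := by
        refine Finset.sum_congr rfl fun d hd => ?_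
        congr 1
        rw [← hwh d hd]
        push_cast
        rfl
    _ = (n : ℂ) * eval x P := by rw [← Finset.mul_sum, eval_eq']

end Aux

/-- Lemma 4.4: for Poisson-commuting quasihomogeneous Hamiltonians `H₁,…,H_k` with
`aⱼ + bⱼ + 1 = h₁`, every `Hᵢ` vanishes at any balance `c` of the `H₁`-system. -/
theorem hamiltonians_vanish_at_balance (m k : ℕ) (hk : 0 < k)
    (a b : Fin m → ℕ) (h : Fin k → ℕ) (hpos : ∀ s, 0 < h s)
    (H : Fin k → MvPolynomial (Fin m ⊕ Fin m) ℂ)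
    -- (H0) pairwise Poisson commutation
    (hH0 : ∀ (s t : Fin k) (x : Fin m ⊕ Fin m → ℂ),
      (∑ i, (eval x (pderiv (Sum.inl i) (H s)) * eval x (pderiv (Sum.inr i) (H t)) -
        eval x (pderiv (Sum.inl i) (H t)) * eval x (pderiv (Sum.inr i) (H s)))) = 0)
    -- (H1) quasihomogeneity
    (hH1 : ∀ (s : Fin k) (t : ℂ) (x : Fin m ⊕ Fin m → ℂ),
      eval (fun j => t ^ Sum.elim a b j * x j) (H s) = t ^ h s * eval x (H s))
    -- (H2)
    (hH2 : ∀ j, a j + b j + 1 = h ⟨0, hk⟩)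
    -- balance of the H₁-system
    (c : Fin m ⊕ Fin m → ℂ)
    (hbalp : ∀ i, eval c (pderiv (Sum.inr i) (H ⟨0, hk⟩)) = -(a i : ℂ) * c (Sum.inl i))
    (hbalq : ∀ i, eval c (pderiv (Sum.inl i) (H ⟨0, hk⟩)) = (b i : ℂ) * c (Sum.inr i)) :
    ∀ s, eval c (H s) = 0 := by
  intro s
  have heuler := euler_identity (Sum.elim a b) (h s) (H s)
    (fun d hd => wh_of_eval (Sum.elim a b) (h s) (H s) (hH1 s) hd) c
  have hsplit : ∑ j : Fin m ⊕ Fin m, ((Sum.elim a b j : ℕ) : ℂ) * c j * eval c (pderiv j (H s))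
      = (∑ i : Fin m, (a i : ℂ) * c (Sum.inl i) * eval c (pderiv (Sum.inl i) (H s)))
        + ∑ i : Fin m, (b i : ℂ) * c (Sum.inr i) * eval c (pderiv (Sum.inr i) (H s)) :=
    by rw [Fintype.sum_sum_type]; simp
  have hb := hH0 ⟨0, hk⟩ s c
  simp only [hbalp, hbalq] at hb
  have hzero : (h s : ℂ) * eval c (H s) = 0 := by
    rw [← heuler, hsplit, ← hb, ← Finset.sum_add_distrib]
    refine Finset.sum_congr rfl fun i _ => ?_
    ring
  have hne : (h s : ℂ) ≠ 0 := Nat.cast_ne_zero.mpr (hpos s).ne'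
  exact (mul_eq_zero.mp hzero).resolve_left hne
end

section
/- Under assumptions (H0), (H1), (H2), for any balance c of the H₁-system and any j = 1,…,k, the row vector dH_j(c) satisfies dH_j(c)·(K(c) − h_j·Id) = 0, where K(c) is the Kovalevskaya matrix. In particular, if dH_j(c) ≠ 0 then h_j is a Kovalevskaya exponent at c. -/
/-!
Write `w = (a, b)` and let `F` be the Hamiltonian vector field of `H₁`, so that `{H_j, H₁} = 0`
reads `Σ_i ∂_i H_j · F_i = 0` and the balance condition reads `F(c) = -w • c`. Differentiating
this identity at `c` gives `dH_j(c) · DF(c) = Σ_i w_i c_i ∂_i dH_j(c)`, and differentiating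
Euler's identity `Σ_i w_i x_i ∂_i H_j = h_j H_j` turns the right-hand side into
`(h_j - w) • dH_j(c)`. Euler's identity is available because quasihomogeneity forces every
monomial of `H_j` to have weight `h_j`: these weights are the exponents of `t` in `H_j(t^w • x)`.
-/

open MvPolynomial

namespace MvPolynomial

variable {R σ : Type*} [CommRing R]

/-- `P ↦ P(t ^ w • X)`, as a polynomial in `t`. -/
noncomputable def scaleByWeight (w : σ → ℕ) : MvPolynomial σ R →ₐ[R] Polynomial (MvPolynomial σ R) :=
  aeval fun j => Polynomial.monomial (w j) (X j)

theorem scaleByWeight_monomial (w : σ → ℕ) (d : σ →₀ ℕ) (r : R) :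
    scaleByWeight w (monomial d r) = Polynomial.monomial (Finsupp.weight w d) (monomial d r) := by
  induction d using Finsupp.induction with
  | zero => simp [scaleByWeight, Polynomial.C_eq_algebraMap]
  | single_add j e d _ _ ih =>
    rw [monomial_single_add, map_mul, ih, map_pow, scaleByWeight, aeval_X,
      Polynomial.monomial_pow, Polynomial.monomial_mul_monomial, map_add, Finsupp.weight_single,
      smul_eq_mul, mul_comm e]

theorem coeff_scaleByWeight (w : σ → ℕ) (P : MvPolynomial σ R) (n : ℕ) :
    (scaleByWeight w P).coeff n = weightedHomogeneousComponent w n P := by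
  classical
  induction P using MvPolynomial.induction_on' with
  | monomial d r =>
    rw [scaleByWeight_monomial, Polynomial.coeff_monomial]
    ext e
    rw [coeff_weightedHomogeneousComponent]
    grind [coeff_monomial, coeff_zero]
  | add p q hp hq => simp [hp, hq]

theorem eval_map_scaleByWeight (w : σ → ℕ) (P : MvPolynomial σ R) (t : R) (x : σ → R) :
    ((scaleByWeight w P).map (eval x)).eval t = eval (fun j => t ^ w j * x j) P := by
  induction P using MvPolynomial.induction_on with
  | C r => simp
  | add p q hp hq => simp [hp, hq]
  | mul_X p j hp =>
    rw [map_mul, Polynomial.map_mul, Polynomial.eval_mul, hp, eval_mul]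
    simp [scaleByWeight, mul_comm]

theorem isWeightedHomogeneous_of_eval_pow_mul [IsDomain R] [Infinite R] {w : σ → ℕ} {N : ℕ}
    {P : MvPolynomial σ R}
    (h : ∀ (t : R) (x : σ → R), eval (fun j => t ^ w j * x j) P = t ^ N * eval x P) :
    P.IsWeightedHomogeneous w N := by
  have hscale (x : σ → R) : (scaleByWeight w P).map (eval x) = Polynomial.monomial N (eval x P) :=
    Polynomial.funext fun t => by
      rw [eval_map_scaleByWeight, h, Polynomial.eval_monomial, mul_comm]
  have hcomp (n : ℕ) (hn : n ≠ N) : weightedHomogeneousComponent w n P = 0 :=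
    MvPolynomial.funext fun x => by
      rw [← coeff_scaleByWeight, ← Polynomial.coeff_map, hscale,
        Polynomial.coeff_monomial_of_ne _ hn, map_zero]
  intro d hd
  by_contra hne
  classical
  have hcoeff := coeff_weightedHomogeneousComponent (w := w) (Finsupp.weight w d) P d
  rw [if_pos rfl, hcomp _ hne, coeff_zero] at hcoeff
  exact hd hcoeff.symm

end MvPolynomial

section Hamiltonian

variable {R ν : Type*} [CommRing R] [Fintype ν]

noncomputable def poissonBracket (G H : MvPolynomial (ν ⊕ ν) R) : MvPolynomial (ν ⊕ ν) R :=
  ∑ i, (pderiv (.inl i) G * pderiv (.inr i) H - pderiv (.inl i) H * pderiv (.inr i) G)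

noncomputable def hamiltonianVectorField (H : MvPolynomial (ν ⊕ ν) R) :
    ν ⊕ ν → MvPolynomial (ν ⊕ ν) R :=
  Sum.elim (fun i => pderiv (.inr i) H) (fun i => -pderiv (.inl i) H)

theorem sum_pderiv_mul_hamiltonianVectorField (G H : MvPolynomial (ν ⊕ ν) R) :
    ∑ j, pderiv j G * hamiltonianVectorField H j = poissonBracket G H := by
  simp only [Fintype.sum_sum_type, hamiltonianVectorField, poissonBracket, Sum.elim_inl,
    Sum.elim_inr, ← Finset.sum_add_distrib]
  exact Finset.sum_congr rfl fun i _ => by ring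

omit [Fintype ν] in
theorem eval_hamiltonianVectorField_eq_neg_weight_mul {H : MvPolynomial (ν ⊕ ν) R}
    {a b : ν → ℕ} {c : ν ⊕ ν → R}
    (hp : ∀ i, eval c (pderiv (.inr i) H) = -(a i : R) * c (.inl i))
    (hq : ∀ i, eval c (pderiv (.inl i) H) = (b i : R) * c (.inr i)) (j : ν ⊕ ν) :
    eval c (hamiltonianVectorField H j) = -(Sum.elim a b j * c j) := by
  rcases j with i | i
  · simp [hamiltonianVectorField, hp]
  · simp [hamiltonianVectorField, hq]

end Hamiltonian

section Kovalevskaya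

variable {R ι : Type*} [CommRing R] [Fintype ι] [DecidableEq ι]

noncomputable def kovalevskayaMatrix (F : ι → MvPolynomial ι R) (w : ι → ℕ) (c : ι → R) :
    Matrix ι ι R :=
  Matrix.of (fun j l => eval c (pderiv l (F j))) + Matrix.diagonal fun j => (w j : R)

omit [DecidableEq ι] in
theorem sum_eval_pderiv_mul_eval_pderiv_eq_neg {G : MvPolynomial ι R}
    {F : ι → MvPolynomial ι R} (hfirst : ∑ j, pderiv j G * F j = 0) (c : ι → R) (l : ι) :
    ∑ j, eval c (pderiv j G) * eval c (pderiv l (F j)) =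
      -∑ j, eval c (pderiv l (pderiv j G)) * eval c (F j) := by
  have h := congrArg (fun P => eval c (pderiv l P)) hfirst
  simp only [map_sum, pderiv_mul, map_add, map_mul, map_zero, Finset.sum_add_distrib] at h
  exact eq_neg_of_add_eq_zero_right h

theorem MvPolynomial.IsWeightedHomogeneous.sum_weight_mul_eval_pderiv_pderiv
    {G : MvPolynomial ι R} {w : ι → ℕ} {N : ℕ} (hhom : G.IsWeightedHomogeneous w N)
    (c : ι → R) (l : ι) :
    ∑ j, eval c (pderiv l (pderiv j G)) * (w j * c j) + w l * eval c (pderiv l G) =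
      N * eval c (pderiv l G) := by
  have h := congrArg (fun P => eval c (pderiv l P)) hhom.sum_weight_X_mul_pderiv
  simp only [map_sum, map_nsmul, pderiv_mul, pderiv_X, map_add, map_mul, eval_X] at h
  simp only [Pi.single_apply, apply_ite (eval c), map_one, map_zero, ite_mul, one_mul, zero_mul,
    smul_add, smul_ite, nsmul_eq_mul, mul_zero, Finset.sum_add_distrib, Finset.sum_ite_eq',
    Finset.mem_univ, ↓reduceIte] at h
  rw [← h, add_comm]
  congr 1
  exact Finset.sum_congr rfl fun j _ => by ring

theorem vecMul_eval_pderiv_kovalevskayaMatrix_sub_eq_zero {G : MvPolynomial ι R}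
    {F : ι → MvPolynomial ι R} {w : ι → ℕ} {N : ℕ} {c : ι → R}
    (hfirst : ∑ j, pderiv j G * F j = 0) (hhom : G.IsWeightedHomogeneous w N)
    (hbal : ∀ j, eval c (F j) = -(w j * c j)) :
    Matrix.vecMul (fun j => eval c (pderiv j G)) (kovalevskayaMatrix F w c - (N : R) • 1) = 0 := by
  funext l
  have hdual := sum_eval_pderiv_mul_eval_pderiv_eq_neg hfirst c l
  have heuler := hhom.sum_weight_mul_eval_pderiv_pderiv c l
  simp only [hbal, mul_neg, Finset.sum_neg_distrib, neg_neg] at hdual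
  simp only [Matrix.vecMul, dotProduct, kovalevskayaMatrix, Matrix.sub_apply, Matrix.add_apply,
    Matrix.of_apply, Matrix.diagonal_apply, Matrix.smul_apply, Matrix.one_apply, smul_eq_mul,
    mul_add, mul_sub, mul_ite, mul_one, mul_zero, Finset.sum_add_distrib, Finset.sum_sub_distrib,
    Finset.sum_ite_eq', Finset.mem_univ, if_true, Pi.zero_apply]
  linear_combination hdual + heuler

end Kovalevskaya

theorem Matrix.mem_spectrum_of_vecMul_sub_smul_one_eq_zero {R ι : Type*} [Field R]
    [Fintype ι] [DecidableEq ι] {K : Matrix ι ι R} {μ : R} {v : ι → R} (hv : v ≠ 0)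
    (h : Matrix.vecMul v (K - μ • 1) = 0) : μ ∈ spectrum R K := by
  rw [spectrum.mem_iff, Matrix.isUnit_iff_isUnit_det, isUnit_iff_ne_zero, not_not,
    Algebra.algebraMap_eq_smul_one, ← neg_sub, ← Matrix.exists_vecMul_eq_zero_iff]
  exact ⟨v, hv, by rw [Matrix.vecMul_neg, h, neg_zero]⟩

theorem gradient_left_eigenvector_general (m k : ℕ) (hk : 0 < k)
    (a b : Fin m → ℕ) (h : Fin k → ℕ)
    (H : Fin k → MvPolynomial (Fin m ⊕ Fin m) ℂ)
    -- (H0) pairwise Poisson commutation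
    (hH0 : ∀ (s t : Fin k) (x : Fin m ⊕ Fin m → ℂ),
      (∑ i, (eval x (pderiv (Sum.inl i) (H s)) * eval x (pderiv (Sum.inr i) (H t)) -
        eval x (pderiv (Sum.inl i) (H t)) * eval x (pderiv (Sum.inr i) (H s)))) = 0)
    -- (H1) quasihomogeneity
    (hH1 : ∀ (s : Fin k) (t : ℂ) (x : Fin m ⊕ Fin m → ℂ),
      eval (fun j => t ^ Sum.elim a b j * x j) (H s) = t ^ h s * eval x (H s))
    -- balance of the H₁-system
    (c : Fin m ⊕ Fin m → ℂ)
    (hbalp : ∀ i, eval c (pderiv (Sum.inr i) (H ⟨0, hk⟩)) = -(a i : ℂ) * c (Sum.inl i))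
    (hbalq : ∀ i, eval c (pderiv (Sum.inl i) (H ⟨0, hk⟩)) = (b i : ℂ) * c (Sum.inr i)) :
    ∀ F : Fin m ⊕ Fin m → MvPolynomial (Fin m ⊕ Fin m) ℂ,
      F = Sum.elim (fun i => pderiv (Sum.inr i) (H ⟨0, hk⟩))
        (fun i => -pderiv (Sum.inl i) (H ⟨0, hk⟩)) →
    ∀ K : Matrix (Fin m ⊕ Fin m) (Fin m ⊕ Fin m) ℂ,
      K = Matrix.of (fun j l => eval c (pderiv l (F j)) +
        if j = l then ((Sum.elim a b j : ℕ) : ℂ) else 0) →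
    ∀ s : Fin k,
      Matrix.vecMul (fun j => eval c (pderiv j (H s))) (K - (h s : ℂ) • 1) = 0 ∧
      ((fun j => eval c (pderiv j (H s))) ≠ 0 → (h s : ℂ) ∈ spectrum ℂ K) := by
  intro F hF K hK s
  have hF : F = hamiltonianVectorField (H ⟨0, hk⟩) := hF
  have hK : K = kovalevskayaMatrix F (Sum.elim a b) c := by
    rw [hK, kovalevskayaMatrix]
    ext j l
    simp [Matrix.diagonal_apply]
  have hbracket : poissonBracket (H s) (H ⟨0, hk⟩) = 0 := MvPolynomial.funext fun x => by
    simpa [poissonBracket] using hH0 s ⟨0, hk⟩ x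
  have hleft : Matrix.vecMul (fun j => eval c (pderiv j (H s))) (K - (h s : ℂ) • 1) = 0 := by
    rw [hK, hF]
    exact vecMul_eval_pderiv_kovalevskayaMatrix_sub_eq_zero
      (by rw [sum_pderiv_mul_hamiltonianVectorField, hbracket])
      (isWeightedHomogeneous_of_eval_pow_mul (hH1 s))
      (eval_hamiltonianVectorField_eq_neg_weight_mul hbalp hbalq)
  exact ⟨hleft, fun hv => Matrix.mem_spectrum_of_vecMul_sub_smul_one_eq_zero hv hleft⟩

/-- Theorem 4.5 (Yoshida): for a balance `c` of the `H₁`-system,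
`dH_j(c)·(K(c) − h_j·Id) = 0`; in particular, if `dH_j(c) ≠ 0`, then `h_j` is a
Kovalevskaya exponent. -/
theorem gradient_left_eigenvector (m k : ℕ) (hk : 0 < k)
    (a b : Fin m → ℕ) (h : Fin k → ℕ)
    (H : Fin k → MvPolynomial (Fin m ⊕ Fin m) ℂ)
    -- (H0) pairwise Poisson commutation
    (hH0 : ∀ (s t : Fin k) (x : Fin m ⊕ Fin m → ℂ),
      (∑ i, (eval x (pderiv (Sum.inl i) (H s)) * eval x (pderiv (Sum.inr i) (H t)) -
        eval x (pderiv (Sum.inl i) (H t)) * eval x (pderiv (Sum.inr i) (H s)))) = 0)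
    -- (H1) quasihomogeneity
    (hH1 : ∀ (s : Fin k) (t : ℂ) (x : Fin m ⊕ Fin m → ℂ),
      eval (fun j => t ^ Sum.elim a b j * x j) (H s) = t ^ h s * eval x (H s))
    -- (H2)
    (hH2 : ∀ j, a j + b j + 1 = h ⟨0, hk⟩)
    -- balance of the H₁-system
    (c : Fin m ⊕ Fin m → ℂ)
    (hbalp : ∀ i, eval c (pderiv (Sum.inr i) (H ⟨0, hk⟩)) = -(a i : ℂ) * c (Sum.inl i))
    (hbalq : ∀ i, eval c (pderiv (Sum.inl i) (H ⟨0, hk⟩)) = (b i : ℂ) * c (Sum.inr i)) :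
    ∀ F : Fin m ⊕ Fin m → MvPolynomial (Fin m ⊕ Fin m) ℂ,
      F = Sum.elim (fun i => pderiv (Sum.inr i) (H ⟨0, hk⟩))
        (fun i => -pderiv (Sum.inl i) (H ⟨0, hk⟩)) →
    ∀ K : Matrix (Fin m ⊕ Fin m) (Fin m ⊕ Fin m) ℂ,
      K = Matrix.of (fun j l => eval c (pderiv l (F j)) +
        if j = l then ((Sum.elim a b j : ℕ) : ℂ) else 0) →
    ∀ s : Fin k,
      Matrix.vecMul (fun j => eval c (pderiv j (H s))) (K - (h s : ℂ) • 1) = 0 ∧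
      ((fun j => eval c (pderiv j (H s))) ≠ 0 → (h s : ℂ) ∈ spectrum ℂ K) :=
  gradient_left_eigenvector_general m k hk a b h H hH0 hH1 c hbalp hbalq
end

section
/- Let f be a quasihomogeneous vector field on ℂᵐ with weights (a₁,…,aₘ) whose only zero is the origin. Consider the blown-up vector field on the first chart: dr/dt = (1/a₁) r f₁(1,X₂,…,Xₘ), dXᵢ/dt = fᵢ(1,X₂,…,Xₘ) − (aᵢ/a₁)Xᵢ f₁(1,X₂,…,Xₘ). Then (0,X₂,…,Xₘ) is a fixed point of this vector field if and only if there exists a balance c = (c₁,…,cₘ) with c₁ ≠ 0 such that Xᵢ = c₁^{−aᵢ/a₁} cᵢ for i = 2,…,m. -/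
open MvPolynomial

/-- Lemma 4.1(i): fixed points of the blown-up vector field on the exceptional divisor
(in the first chart) correspond exactly to balances `c` with `c₁ ≠ 0` via
`Xᵢ = c₁^{-aᵢ/a₁} cᵢ` (i.e. `cⱼ = λ^{aⱼ} Xⱼ` for a branch `λ` with `λ^{a₁} = c₁`). -/
theorem blowup_fixed_point_iff_balance (m : ℕ) (hm : 0 < m)
    (a : Fin m → ℕ) (ha : ∀ i, 0 < a i)
    (f : Fin m → MvPolynomial (Fin m) ℂ)
    -- (K1) quasihomogeneity
    (hhom : ∀ (i : Fin m) (t : ℂ) (x : Fin m → ℂ),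
      eval (fun j => t ^ a j * x j) (f i) = t ^ (1 + a i) * eval x (f i))
    -- (S) the only fixed point of the truncated system is the origin
    (hS : ∀ x : Fin m → ℂ, (∀ i, eval x (f i) = 0) → x = 0)
    (X : Fin m → ℂ) (hX : X ⟨0, hm⟩ = 1) :
    (∀ i : Fin m, i ≠ ⟨0, hm⟩ →
        (a ⟨0, hm⟩ : ℂ) * eval X (f i) - (a i : ℂ) * X i * eval X (f ⟨0, hm⟩) = 0) ↔
      ∃ lam : ℂ, lam ≠ 0 ∧
        ∀ i, eval (fun j => lam ^ a j * X j) (f i) = -(a i : ℂ) * (lam ^ a i * X i) := by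
  set z : Fin m := ⟨0, hm⟩ with hz
  have haz : (a z : ℂ) ≠ 0 := Nat.cast_ne_zero.mpr (ha z).ne'
  constructor
  · intro h
    have hf0 : eval X (f z) ≠ 0 := by
      intro h0
      have hall : ∀ i, eval X (f i) = 0 := by
        intro i
        by_cases hi : i = z
        · rw [hi, h0]
        · have hi' := h i hi
          rw [h0, mul_zero, sub_zero, mul_eq_zero] at hi'
          exact hi'.resolve_left haz
      have hX0 := hS X hall
      rw [hX0] at hX
      simp at hX
    refine ⟨-(a z : ℂ) / eval X (f z), ?_, ?_⟩
    · exact div_ne_zero (neg_ne_zero.mpr haz) hf0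
    · intro i
      set lam : ℂ := -(a z : ℂ) / eval X (f z) with hlam
      have key : lam * eval X (f i) = -(a i : ℂ) * X i := by
        by_cases hi : i = z
        · subst hi
          rw [hX, hlam]
          field_simp
        · have hi' := h i hi
          rw [hlam, div_mul_eq_mul_div, div_eq_iff hf0]
          linear_combination -hi'
      rw [hhom i lam X]
      linear_combination lam ^ (a i) * key
  · rintro ⟨lam, hlam, hl⟩ i hi
    have key : ∀ j, lam * eval X (f j) = -(a j : ℂ) * X j := by
      intro j
      have hj := hl j
      rw [hhom j lam X] at hj
      have hp : lam ^ (a j) ≠ 0 := pow_ne_zero _ hlam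
      apply mul_left_cancel₀ hp
      linear_combination hj
    have e1 := key i
    have e0 := key z
    have hmain : lam * ((a z : ℂ) * eval X (f i) - (a i : ℂ) * X i * eval X (f z)) = 0 := by
      rw [hX] at e0
      linear_combination (a z : ℂ) * e1 - ((a i : ℂ) * X i) * e0
    exact (mul_eq_zero.mp hmain).resolve_left hlam
end

section
/- For the pair H₁ = 2p₂p₁ + 3p₂²q₁ + q₁⁴ − q₁²q₂ − q₂² and H₂ = p₁² + 2p₂p₁q₁ − q₁⁵ + p₂²q₂ + 3q₁³q₂ − 2q₁q₂² on ℂ⁴: {H₁, H₂} = 0 with respect to the canonical Poisson bracket, and at the balance c₁ = (1,1,1,−1), the gradient dH₂(c₁) = 0 while dH₁(c₁) ≠ 0. -/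
open MvPolynomial

lemma pC2' (i : Fin 4) : pderiv i (2 : MvPolynomial (Fin 4) ℂ) = 0 := by
  rw [show (2 : MvPolynomial (Fin 4) ℂ) = C 2 from (map_ofNat C 2).symm, pderiv_C]

lemma pC3' (i : Fin 4) : pderiv i (3 : MvPolynomial (Fin 4) ℂ) = 0 := by
  rw [show (3 : MvPolynomial (Fin 4) ℂ) = C 3 from (map_ofNat C 3).symm, pderiv_C]

/-- For the autonomous `(P_I)₂` Hamiltonians `H₁, H₂`, one has `{H₁,H₂} = 0`, and at the
balance `c₁ = (1,1,1,-1)` the gradient `dH₂(c₁)` vanishes while `dH₁(c₁)` does not.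
(Variables: `X 0 = q₁`, `X 1 = q₂`, `X 2 = p₁`, `X 3 = p₂`.) -/
theorem PI2_poisson_commute_and_gradient
    (H₁ H₂ : MvPolynomial (Fin 4) ℂ)
    (hH₁ : H₁ = 2 * X 3 * X 2 + 3 * X 3 ^ 2 * X 0 + X 0 ^ 4 - X 0 ^ 2 * X 1 - X 1 ^ 2)
    (hH₂ : H₂ = X 2 ^ 2 + 2 * X 3 * X 2 * X 0 - X 0 ^ 5 + X 3 ^ 2 * X 1 +
      3 * X 0 ^ 3 * X 1 - 2 * X 0 * X 1 ^ 2) :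
    (pderiv 0 H₁ * pderiv 2 H₂ + pderiv 1 H₁ * pderiv 3 H₂ -
      pderiv 0 H₂ * pderiv 2 H₁ - pderiv 1 H₂ * pderiv 3 H₁ = 0) ∧
    (∀ j : Fin 4, eval ![1, 1, 1, -1] (pderiv j H₂) = 0) ∧
    ¬(∀ j : Fin 4, eval ![1, 1, 1, -1] (pderiv j H₁) = 0) := by
  have d10 : pderiv 0 H₁ = 3 * X 3 ^ 2 + 4 * X 0 ^ 3 - 2 * X 0 * X 1 := by
    rw [hH₁]
    simp only [map_add, map_sub, pderiv_mul, pderiv_pow, pderiv_X, Pi.single_apply, pC2', pC3']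
    simp
  have d11 : pderiv 1 H₁ = -(X 0 ^ 2) - 2 * X 1 := by
    rw [hH₁]
    simp only [map_add, map_sub, pderiv_mul, pderiv_pow, pderiv_X, Pi.single_apply, pC2', pC3']
    simp
  have d12 : pderiv 2 H₁ = 2 * X 3 := by
    rw [hH₁]
    simp only [map_add, map_sub, pderiv_mul, pderiv_pow, pderiv_X, Pi.single_apply, pC2', pC3']
    simp
  have d13 : pderiv 3 H₁ = 2 * X 2 + 6 * X 3 * X 0 := by
    rw [hH₁]
    simp only [map_add, map_sub, pderiv_mul, pderiv_pow, pderiv_X, Pi.single_apply, pC2', pC3']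
    simp; ring
  have d20 : pderiv 0 H₂ = 2 * X 3 * X 2 - 5 * X 0 ^ 4 + 9 * X 0 ^ 2 * X 1 - 2 * X 1 ^ 2 := by
    rw [hH₂]
    simp only [map_add, map_sub, pderiv_mul, pderiv_pow, pderiv_X, Pi.single_apply, pC2', pC3']
    simp; ring
  have d21 : pderiv 1 H₂ = X 3 ^ 2 + 3 * X 0 ^ 3 - 4 * X 0 * X 1 := by
    rw [hH₂]
    simp only [map_add, map_sub, pderiv_mul, pderiv_pow, pderiv_X, Pi.single_apply, pC2', pC3']
    simp; ring
  have d22 : pderiv 2 H₂ = 2 * X 2 + 2 * X 3 * X 0 := by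
    rw [hH₂]
    simp only [map_add, map_sub, pderiv_mul, pderiv_pow, pderiv_X, Pi.single_apply, pC2', pC3']
    simp
  have d23 : pderiv 3 H₂ = 2 * X 2 * X 0 + 2 * X 3 * X 1 := by
    rw [hH₂]
    simp only [map_add, map_sub, pderiv_mul, pderiv_pow, pderiv_X, Pi.single_apply, pC2', pC3']
    simp
  refine ⟨?_, ?_, ?_⟩
  · rw [d10, d11, d12, d13, d20, d21, d22, d23]; ring
  · intro j
    fin_cases j
    · rw [show ((⟨0, by norm_num⟩ : Fin 4)) = (0 : Fin 4) from rfl, d20]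
      simp; ring
    · rw [show ((⟨1, by norm_num⟩ : Fin 4)) = (1 : Fin 4) from rfl, d21]
      simp; ring
    · rw [show ((⟨2, by norm_num⟩ : Fin 4)) = (2 : Fin 4) from rfl, d22]
      simp
    · rw [show ((⟨3, by norm_num⟩ : Fin 4)) = (3 : Fin 4) from rfl, d23]
      simp
  · intro h
    have := h 2
    rw [d12] at this
    simp at this
end

section
/- For the Hamiltonian H₁ = 2p₁p₂ − p₂³ − p₁q₁² + q₂² on ℂ⁴ with weights (deg q₁, deg q₂, deg p₁, deg p₂) = (1,3,4,2), the balances are exactly c₁ = (1,0,0,0), c₂ = (−1,1,0,1), c₃ = (2,1,0,1), c₄ = (−2,3,9,3). The Kovalevskaya exponents at c₁ and c₂ are {−1,2,3,6} and at c₃ and c₄ are {−3,−1,6,8}. -/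
open MvPolynomial

private lemma balance_solve (a b c d : ℂ)
    (e0 : 2*d - a^2 = -a) (e1 : 2*c - 3*d^2 = -3*b) (e2 : 2*c*a = -4*c) (e3 : -2*b = -2*d)
    (hne : ¬(a = 0 ∧ b = 0 ∧ c = 0 ∧ d = 0)) :
    (a=1∧b=0∧c=0∧d=0) ∨ (a=-1∧b=1∧c=0∧d=1) ∨ (a=2∧b=1∧c=0∧d=1) ∨ (a=-2∧b=3∧c=9∧d=3) := by
  have hbd : b = d := by linear_combination (-1/2 : ℂ) * e3
  have h2' : c * (a + 2) = 0 := by linear_combination e2/2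
  rcases mul_eq_zero.mp h2' with hc | ha2
  · have hd : d * (d - 1) = 0 := by linear_combination (-1/3 : ℂ)*e1 + (2/3 : ℂ)*hc + hbd
    rcases mul_eq_zero.mp hd with hd0 | hd1
    · have hb : b = 0 := by rw [hbd, hd0]
      have ha : a * (a - 1) = 0 := by linear_combination -e0 + 2*hd0
      rcases mul_eq_zero.mp ha with ha0 | ha1
      · exact absurd ⟨ha0, hb, hc, hd0⟩ hne
      · exact Or.inl ⟨by linear_combination ha1, hb, hc, hd0⟩
    · have hd' : d = 1 := by linear_combination hd1
      have hb : b = 1 := by rw [hbd, hd']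
      have ha : (a - 2) * (a + 1) = 0 := by linear_combination -e0 + 2*hd'
      rcases mul_eq_zero.mp ha with h | h
      · exact Or.inr (Or.inr (Or.inl ⟨by linear_combination h, hb, hc, hd'⟩))
      · exact Or.inr (Or.inl ⟨by linear_combination h, hb, hc, hd'⟩)
  · have ha : a = -2 := by linear_combination ha2
    have hd : d = 3 := by linear_combination e0/2 + (a-3)/2 * ha
    have hb : b = 3 := by rw [hbd, hd]
    have hcv : c = 9 := by linear_combination e1/2 + (3*(d+3)/2)*hd - (3/2 : ℂ)*hb
    exact Or.inr (Or.inr (Or.inr ⟨ha, hb, hcv, hd⟩))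

set_option maxHeartbeats 1000000 in
private theorem det4 (A : Matrix (Fin 4) (Fin 4) ℂ) : A.det =
    A 0 0 * (A 1 1 * (A 2 2 * A 3 3 - A 2 3 * A 3 2) - A 1 2 * (A 2 1 * A 3 3 - A 2 3 * A 3 1) + A 1 3 * (A 2 1 * A 3 2 - A 2 2 * A 3 1))
  - A 0 1 * (A 1 0 * (A 2 2 * A 3 3 - A 2 3 * A 3 2) - A 1 2 * (A 2 0 * A 3 3 - A 2 3 * A 3 0) + A 1 3 * (A 2 0 * A 3 2 - A 2 2 * A 3 0))
  + A 0 2 * (A 1 0 * (A 2 1 * A 3 3 - A 2 3 * A 3 1) - A 1 1 * (A 2 0 * A 3 3 - A 2 3 * A 3 0) + A 1 3 * (A 2 0 * A 3 1 - A 2 1 * A 3 0))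
  - A 0 3 * (A 1 0 * (A 2 1 * A 3 2 - A 2 2 * A 3 1) - A 1 1 * (A 2 0 * A 3 2 - A 2 2 * A 3 0) + A 1 2 * (A 2 0 * A 3 1 - A 2 1 * A 3 0)) := by
  rw [Matrix.det_succ_row_zero]
  simp [Fin.sum_univ_succ, Matrix.det_fin_three, Fin.succAbove,
    show (Fin.succ 2 : Fin 4) = 3 from rfl, show Fin.castSucc (2 : Fin 3) = (2 : Fin 4) from rfl,
    show ((1:Fin 4) < Fin.succ 2) = True from by simp [Fin.lt_def]]
  ring

private lemma spec4 (A : Matrix (Fin 4) (Fin 4) ℂ) (r1 r2 r3 r4 : ℂ)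
    (h : ∀ μ : ℂ, (algebraMap ℂ (Matrix (Fin 4) (Fin 4) ℂ) μ - A).det
      = (μ - r1)*(μ - r2)*(μ - r3)*(μ - r4)) :
    spectrum ℂ A = {r1, r2, r3, r4} := by
  ext μ
  rw [spectrum.mem_iff, Matrix.isUnit_iff_isUnit_det, isUnit_iff_ne_zero, not_ne_iff, h]
  simp only [mul_eq_zero, sub_eq_zero, Set.mem_insert_iff, Set.mem_singleton_iff]
  tauto

set_option maxHeartbeats 2000000 in
/-- Example 4.11: for the autonomous part `H₁ = 2p₁p₂ − p₂³ − p₁q₁² + q₂²` of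
`(P_{II-1})₂` with weights `deg(q₁,q₂,p₁,p₂) = (1,3,4,2)`, the balances are exactly
`(1,0,0,0)`, `(−1,1,0,1)`, `(2,1,0,1)`, `(−2,3,9,3)`, with Kovalevskaya exponents
`{−1,2,3,6}` for the first two and `{−3,−1,6,8}` for the last two.
(Variables: `X 0 = q₁`, `X 1 = q₂`, `X 2 = p₁`, `X 3 = p₂`.) -/
theorem PII12_balances_and_exponents
    (H : MvPolynomial (Fin 4) ℂ)
    (hH : H = 2 * X 2 * X 3 - X 3 ^ 3 - X 2 * X 0 ^ 2 + X 1 ^ 2)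
    (F : Fin 4 → MvPolynomial (Fin 4) ℂ)
    (hF : F = ![pderiv 2 H, pderiv 3 H, -pderiv 0 H, -pderiv 1 H])
    (w : Fin 4 → ℕ) (hw : w = ![1, 3, 4, 2])
    (K : (Fin 4 → ℂ) → Matrix (Fin 4) (Fin 4) ℂ)
    (hK : K = fun c => Matrix.of fun i j =>
      eval c (pderiv j (F i)) + if i = j then (w i : ℂ) else 0) :
    (∀ c : Fin 4 → ℂ, c ≠ 0 →
      ((∀ i, eval c (F i) = -(w i : ℂ) * c i) ↔
        (c = ![1, 0, 0, 0] ∨ c = ![-1, 1, 0, 1] ∨ c = ![2, 1, 0, 1] ∨ c = ![-2, 3, 9, 3]))) ∧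
    spectrum ℂ (K ![1, 0, 0, 0]) = {-1, 2, 3, 6} ∧
    spectrum ℂ (K ![-1, 1, 0, 1]) = {-1, 2, 3, 6} ∧
    spectrum ℂ (K ![2, 1, 0, 1]) = {-3, -1, 6, 8} ∧
    spectrum ℂ (K ![-2, 3, 9, 3]) = {-3, -1, 6, 8} := by
  have h2C : (2 : MvPolynomial (Fin 4) ℂ) = C 2 := (map_ofNat C 2).symm
  have h3C : (3 : MvPolynomial (Fin 4) ℂ) = C 3 := (map_ofNat C 3).symm
  subst hH hF hw hK
  refine ⟨?_, ?_, ?_, ?_, ?_⟩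
  · intro c hc
    have hne : ¬(c 0 = 0 ∧ c 1 = 0 ∧ c 2 = 0 ∧ c 3 = 0) := by
      rintro ⟨h0, h1, h2, h3⟩
      exact hc (funext fun i => by fin_cases i <;> assumption)
    constructor
    · intro h
      have E0 : 2*(c 3) - (c 0)^2 = -(c 0) := by
        have := h 0
        simp [h2C, h3C, pderiv_mul, pderiv_X, pderiv_C, Pi.single_apply] at this
        linear_combination this
      have E1 : 2*(c 2) - 3*(c 3)^2 = -3*(c 1) := by
        have := h 1
        simp [h2C, h3C, pderiv_mul, pderiv_X, pderiv_C, Pi.single_apply] at this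
        linear_combination this
      have E2 : 2*(c 2)*(c 0) = -4*(c 2) := by
        have := h 2
        simp [h2C, h3C, pderiv_mul, pderiv_X, pderiv_C, Pi.single_apply] at this
        linear_combination this
      have E3 : -2*(c 1) = -2*(c 3) := by
        have := h 3
        simp [h2C, h3C, pderiv_mul, pderiv_X, pderiv_C, Pi.single_apply] at this
        linear_combination -2*this
      rcases balance_solve (c 0) (c 1) (c 2) (c 3) E0 E1 E2 E3 hne with
        ⟨ha, hb, hcc, hd⟩ | ⟨ha, hb, hcc, hd⟩ | ⟨ha, hb, hcc, hd⟩ | ⟨ha, hb, hcc, hd⟩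
      · exact Or.inl (funext fun i => by fin_cases i <;> simp [ha, hb, hcc, hd])
      · exact Or.inr (Or.inl (funext fun i => by fin_cases i <;> simp [ha, hb, hcc, hd]))
      · exact Or.inr (Or.inr (Or.inl (funext fun i => by fin_cases i <;> simp [ha, hb, hcc, hd])))
      · exact Or.inr (Or.inr (Or.inr (funext fun i => by fin_cases i <;> simp [ha, hb, hcc, hd])))
    · rintro (rfl | rfl | rfl | rfl) <;> intro i <;> fin_cases i <;>
        simp [h2C, h3C, pderiv_mul, pderiv_X, pderiv_C, Pi.single_apply] <;> ring
  · apply spec4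
    intro μ
    rw [det4]
    simp [Matrix.sub_apply, Matrix.algebraMap_matrix_apply, Matrix.of_apply,
      h2C, h3C, pderiv_mul, pderiv_X, pderiv_C, Pi.single_apply]
    ring
  · apply spec4
    intro μ
    rw [det4]
    simp [Matrix.sub_apply, Matrix.algebraMap_matrix_apply, Matrix.of_apply,
      h2C, h3C, pderiv_mul, pderiv_X, pderiv_C, Pi.single_apply]
    ring
  · apply spec4
    intro μ
    rw [det4]
    simp [Matrix.sub_apply, Matrix.algebraMap_matrix_apply, Matrix.of_apply,
      h2C, h3C, pderiv_mul, pderiv_X, pderiv_C, Pi.single_apply]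
    ring
  · apply spec4
    intro μ
    rw [det4]
    simp [Matrix.sub_apply, Matrix.algebraMap_matrix_apply, Matrix.of_apply,
      h2C, h3C, pderiv_mul, pderiv_X, pderiv_C, Pi.single_apply]
    ring
end
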